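/- Let n ≥ 2 and let g_1,…,g_{n+1} be real constants. Define Q : ℝ^n × ℝ^n → ℝ by Q(x,z) = exp( g_1 e^{z_1} + Σ_{i=1}^{n−1} ( e^{x_i − z_i} + g_{i+1} e^{z_{i+1} − x_i} ) + e^{x_n − z_n} + g_{n+1} e^{−x_n − z_n} ). Then for all x, z ∈ ℝ^n: −(1/2) Σ_{i=1}^{n} ∂²Q/∂x_i² + [ g_1 e^{x_1} + Σ_{i=1}^{n−1} g_{i+1} e^{x_{i+1} − x_i} + g_n g_{n+1} e^{−x_n − x_{n−1}} ] Q = −(1/2) Σ_{i=1}^{n} ∂²Q/∂z_i² + [ (g_1/2)( e^{z_1} + g_1 e^{2 z_1} ) + Σ_{i=1}^{n−1} g_{i+1} e^{z_{i+1} − z_i} + 2 g_{n+1} e^{−2 z_n} ] Q. That is, Q intertwines the quadratic Hamiltonians of the affine B^{(1)}_n and BC^{(1)}_n closed Toda chains. -/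

import Mathlib

/-!
Write `Q = exp S`, where the phase `S` is a sum of bonds `d = g₁ e^{z₁}`, `a_j = e^{x_j - z_j}`,
`b_j = g_{j+1} e^{z_{j+1} - x_j}` and `c = g_{n+1} e^{-x_n - z_n}`. Along a single coordinate every
bond is constant or a constant multiple of `e^{±t}`, so `∂²_i Q = Q ((∂_i S)² + ∂²_i S)` equals
`Q ((p - q)² + (p + q))`, where `p` and `q` are the sums of the bonds increasing, resp. decreasing,
in that coordinate. Both Toda potentials are quadratic in the bonds as well
(`g_{i+1} e^{x_{i+1} - x_i} = b_i a_{i+1}`, `g₁² e^{2z₁} = d²`, ...), so after dividing by `Q` the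
intertwining relation becomes a polynomial identity in the bonds, which telescopes.
-/

open Real

/-- Second partial derivative of `f` in the `i`-th coordinate at `x`. -/
noncomputable def pd2 {k : ℕ} (f : (Fin k → ℝ) → ℝ) (i : Fin k) (x : Fin k → ℝ) : ℝ :=
  deriv (deriv (fun t : ℝ => f (Function.update x i t))) (x i)

/-- The elementary kernel intertwining the affine `B^{(1)}_n` and `BC^{(1)}_n`
closed Toda chains (`n = m + 2 ≥ 2`):
`Q(x,z) = exp( g_1 e^{z_1} + Σ_{i=1}^{n−1} ( e^{x_i − z_i} + g_{i+1} e^{z_{i+1} − x_i} ) + e^{x_n − z_n} + g_{n+1} e^{−x_n − z_n} )`. -/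
noncomputable def Qker (m : ℕ) (g : Fin (m + 3) → ℝ)
    (x z : Fin (m + 2) → ℝ) : ℝ :=
  Real.exp (g 0 * Real.exp (z 0)
    + (∑ i : Fin (m + 1), (Real.exp (x i.castSucc - z i.castSucc)
        + g i.succ.castSucc * Real.exp (z i.succ - x i.castSucc)))
    + Real.exp (x (Fin.last (m + 1)) - z (Fin.last (m + 1)))
    + g (Fin.last (m + 2)) * Real.exp (-x (Fin.last (m + 1)) - z (Fin.last (m + 1))))

open Function

theorem deriv_deriv_exp_comp {φ φ' : ℝ → ℝ} {φ'' s : ℝ} (hφ : ∀ t, HasDerivAt φ (φ' t) t)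
    (hφ' : HasDerivAt φ' φ'' s) :
    deriv (deriv fun t => exp (φ t)) s = exp (φ s) * (φ' s ^ 2 + φ'') := by
  have hderiv : deriv (fun t => exp (φ t)) = fun t => exp (φ t) * φ' t :=
    funext fun t => (hφ t).exp.deriv
  rw [hderiv]
  exact ((hφ s).exp.mul hφ').deriv.trans (by ring)

theorem deriv_deriv_exp_laurent (C p q s : ℝ) :
    deriv (deriv fun t => exp (C + p * (exp (t - s) - 1) + q * (exp (s - t) - 1))) s
      = exp C * ((p - q) ^ 2 + (p + q)) := by
  have hup (t : ℝ) : HasDerivAt (fun t => exp (t - s)) (exp (t - s)) t := by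
    simpa using ((hasDerivAt_id t).sub_const s).exp
  have hdown (t : ℝ) : HasDerivAt (fun t => exp (s - t)) (-exp (s - t)) t := by
    simpa using ((hasDerivAt_id t).const_sub s).exp
  have hφ (t : ℝ) : HasDerivAt (fun t => C + p * (exp (t - s) - 1) + q * (exp (s - t) - 1))
      (p * exp (t - s) - q * exp (s - t)) t :=
    ((((hup t).sub_const 1).const_mul p).const_add C).add
      (((hdown t).sub_const 1).const_mul q) |>.congr_deriv (by ring)
  have hφ' : HasDerivAt (fun t => p * exp (t - s) - q * exp (s - t)) (p + q) s :=
    ((hup s).const_mul p).sub ((hdown s).const_mul q) |>.congr_deriv (by simp)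
  rw [deriv_deriv_exp_comp hφ hφ']
  simp

theorem pd2_exp_of_update {k : ℕ} {f S : (Fin k → ℝ) → ℝ} (hf : ∀ y, f y = exp (S y))
    {i : Fin k} {x : Fin k → ℝ} {p q : ℝ}
    (hS : ∀ t, S (update x i t) = S x + p * (exp (t - x i) - 1) + q * (exp (x i - t) - 1)) :
    pd2 f i x = f x * ((p - q) ^ 2 + (p + q)) := by
  simp only [pd2, hf, hS, deriv_deriv_exp_laurent]

theorem sum_update_comp {ι κ α M : Type*} [Fintype ι] [DecidableEq ι] [DecidableEq κ]
    [AddCommGroup M] {e : ι → κ} (he : Injective e) {k : ι} {i : κ} (hk : e k = i)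
    (F : ι → α → M) (y : κ → α) (t : α) :
    ∑ j, F j (update y i t (e j)) = ∑ j, F j (y (e j)) + (F k t - F k (y i)) := by
  subst hk
  have hpt : (fun j => F j (update y (e k) t (e j)))
      = update (fun j => F j (y (e j))) k (F k t) := by
    funext j
    rcases eq_or_ne j k with rfl | hj
    · simp
    · simp [hj, update_of_ne (he.ne hj)]
  rw [hpt, Finset.sum_update_of_mem (Finset.mem_univ k), Finset.sdiff_singleton_eq_erase,
    Finset.sum_erase_eq_sub (Finset.mem_univ k)]
  abel

theorem sum_update_apply {ι α M : Type*} [Fintype ι] [DecidableEq ι] [AddCommGroup M]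
    (F : ι → α → M) (y : ι → α) (i : ι) (t : α) :
    ∑ j, F j (update y i t j) = ∑ j, F j (y j) + (F i t - F i (y i)) :=
  sum_update_comp injective_id rfl F y t

namespace Qker

variable {m : ℕ} (g : Fin (m + 3) → ℝ) (x z : Fin (m + 2) → ℝ)

noncomputable def headBond : ℝ := g 0 * exp (z 0)

noncomputable def diagBond (j : Fin (m + 2)) : ℝ := exp (x j - z j)

noncomputable def crossBond (j : Fin (m + 1)) : ℝ :=
  g j.succ.castSucc * exp (z j.succ - x j.castSucc)

noncomputable def tailBond : ℝ :=
  g (Fin.last (m + 2)) * exp (-x (Fin.last (m + 1)) - z (Fin.last (m + 1)))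

noncomputable def phase : ℝ :=
  headBond g z + ∑ j, diagBond x z j + ∑ j, crossBond g x z j + tailBond g x z

theorem eq_exp_phase : Qker m g x z = exp (phase g x z) := by
  rw [Qker, phase, Fin.sum_univ_castSucc (diagBond x z), Finset.sum_add_distrib]
  simp only [headBond, diagBond, crossBond, tailBond]
  ring_nf

theorem phase_update_left_castSucc (k : Fin (m + 1)) (t : ℝ) :
    phase g (update x k.castSucc t) z = phase g x z
      + diagBond x z k.castSucc * (exp (t - x k.castSucc) - 1)
      + crossBond g x z k * (exp (x k.castSucc - t) - 1) := by
  simp only [phase, headBond, diagBond, crossBond, tailBond]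
  rw [sum_update_apply (fun j s => exp (s - z j)),
    sum_update_comp (Fin.castSucc_injective _) rfl
      (fun j s => g j.succ.castSucc * exp (z j.succ - s)),
    update_of_ne (Fin.castSucc_lt_last k).ne']
  simp only [exp_sub]
  field_simp
  ring

theorem phase_update_left_last (t : ℝ) :
    phase g (update x (Fin.last (m + 1)) t) z = phase g x z
      + diagBond x z (Fin.last (m + 1)) * (exp (t - x (Fin.last (m + 1))) - 1)
      + tailBond g x z * (exp (x (Fin.last (m + 1)) - t) - 1) := by
  simp only [phase, headBond, diagBond, crossBond, tailBond]
  rw [sum_update_apply (fun j s => exp (s - z j))]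
  simp only [update_self, update_of_ne (Fin.castSucc_lt_last _).ne, exp_sub, exp_neg]
  field_simp
  ring

theorem phase_update_right_zero (t : ℝ) :
    phase g x (update z 0 t) = phase g x z
      + headBond g z * (exp (t - z 0) - 1) + diagBond x z 0 * (exp (z 0 - t) - 1) := by
  simp only [phase, headBond, diagBond, crossBond, tailBond]
  rw [sum_update_apply (fun j s => exp (x j - s))]
  simp only [update_self, update_of_ne (Fin.succ_ne_zero _), update_of_ne (Fin.last_pos).ne',
    exp_sub]
  field_simp
  ring

theorem phase_update_right_succ_castSucc (k : Fin m) (t : ℝ) :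
    phase g x (update z k.castSucc.succ t) = phase g x z
      + crossBond g x z k.castSucc * (exp (t - z k.castSucc.succ) - 1)
      + diagBond x z k.castSucc.succ * (exp (z k.castSucc.succ - t) - 1) := by
  simp only [phase, headBond, diagBond, crossBond, tailBond]
  rw [sum_update_apply (fun j s => exp (x j - s)),
    sum_update_comp (Fin.succ_injective _) rfl
      (fun j s => g j.succ.castSucc * exp (s - x j.castSucc)),
    update_of_ne (Fin.succ_ne_zero _).symm,
    update_of_ne (Fin.succ_castSucc k ▸ Fin.castSucc_lt_last _).ne']
  simp only [exp_sub]
  field_simp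
  ring

theorem phase_update_right_last (t : ℝ) :
    phase g x (update z (Fin.last (m + 1)) t) = phase g x z
      + crossBond g x z (Fin.last m) * (exp (t - z (Fin.last (m + 1))) - 1)
      + (diagBond x z (Fin.last (m + 1)) + tailBond g x z)
        * (exp (z (Fin.last (m + 1)) - t) - 1) := by
  simp only [phase, headBond, diagBond, crossBond, tailBond]
  rw [sum_update_apply (fun j s => exp (x j - s)),
    sum_update_comp (Fin.succ_injective _) (Fin.succ_last m)
      (fun j s => g j.succ.castSucc * exp (s - x j.castSucc)),
    update_of_ne (Fin.last_pos).ne, update_self]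
  simp only [Fin.succ_last, exp_sub, exp_neg]
  field_simp
  ring

theorem bond_identity (a : Fin (m + 2) → ℝ) (b : Fin (m + 1) → ℝ) (c d : ℝ) :
    -(1 / 2) * (∑ k, ((a k.castSucc - b k) ^ 2 + (a k.castSucc + b k))
        + ((a (Fin.last _) - c) ^ 2 + (a (Fin.last _) + c)))
      + (d * a 0 + ∑ k, b k * a k.succ + b (Fin.last m) * c)
    = -(1 / 2) * (((d - a 0) ^ 2 + (d + a 0))
        + ∑ k : Fin m, ((b k.castSucc - a k.castSucc.succ) ^ 2 + (b k.castSucc + a k.castSucc.succ))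
        + ((b (Fin.last m) - (a (Fin.last _) + c)) ^ 2 + (b (Fin.last m) + (a (Fin.last _) + c))))
      + (d / 2 + d ^ 2 / 2 + ∑ k, a k.castSucc * b k + 2 * (a (Fin.last _) * c)) := by
  have hmid := Fin.sum_univ_castSucc fun k : Fin (m + 1) => (b k - a k.succ) ^ 2 + (b k + a k.succ)
  have hsum : ∑ k : Fin (m + 1), ((a k.castSucc - b k) ^ 2 + (a k.castSucc + b k))
      = ∑ k, ((b k - a k.succ) ^ 2 + (b k + a k.succ)) + 2 * ∑ k, b k * a k.succ
        - 2 * ∑ k, a k.castSucc * b k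
        + ∑ k : Fin (m + 1), (a k.castSucc ^ 2 + a k.castSucc)
        - ∑ k : Fin (m + 1), (a k.succ ^ 2 + a k.succ) := by
    simp only [Finset.mul_sum, ← Finset.sum_add_distrib, ← Finset.sum_sub_distrib]
    exact Finset.sum_congr rfl fun k _ => by ring
  have hleft := Fin.sum_univ_castSucc fun j : Fin (m + 2) => a j ^ 2 + a j
  have hright := Fin.sum_univ_succ fun j : Fin (m + 2) => a j ^ 2 + a j
  simp only [Fin.succ_last] at hmid
  linear_combination (-1 / 2) * hsum - (1 / 2) * hmid + (1 / 2) * (hleft - hright)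

theorem sum_pd2_left :
    ∑ i, pd2 (fun u => Qker m g u z) i x = Qker m g x z
      * (∑ k, ((diagBond x z k.castSucc - crossBond g x z k) ^ 2
            + (diagBond x z k.castSucc + crossBond g x z k))
        + ((diagBond x z (Fin.last _) - tailBond g x z) ^ 2
            + (diagBond x z (Fin.last _) + tailBond g x z))) := by
  have hQ (u : Fin (m + 2) → ℝ) := eq_exp_phase g u z
  rw [Fin.sum_univ_castSucc,
    Finset.sum_congr rfl fun k _ => pd2_exp_of_update hQ (phase_update_left_castSucc g x z k),
    pd2_exp_of_update hQ (phase_update_left_last g x z), ← Finset.mul_sum]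
  ring

theorem sum_pd2_right :
    ∑ i, pd2 (fun v => Qker m g x v) i z = Qker m g x z
      * (((headBond g z - diagBond x z 0) ^ 2 + (headBond g z + diagBond x z 0))
        + ∑ k : Fin m, ((crossBond g x z k.castSucc - diagBond x z k.castSucc.succ) ^ 2
            + (crossBond g x z k.castSucc + diagBond x z k.castSucc.succ))
        + ((crossBond g x z (Fin.last m) - (diagBond x z (Fin.last _) + tailBond g x z)) ^ 2
            + (crossBond g x z (Fin.last m) + (diagBond x z (Fin.last _) + tailBond g x z)))) := by
  have hQ (v : Fin (m + 2) → ℝ) := eq_exp_phase g x v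
  rw [Fin.sum_univ_succ, Fin.sum_univ_castSucc, Fin.succ_last,
    pd2_exp_of_update hQ (phase_update_right_zero g x z),
    Finset.sum_congr rfl fun k _ => pd2_exp_of_update hQ (phase_update_right_succ_castSucc g x z k),
    pd2_exp_of_update hQ (phase_update_right_last g x z), ← Finset.mul_sum]
  ring

theorem potential_B_eq :
    g 0 * exp (x 0)
        + ∑ i : Fin (m + 1), g i.succ.castSucc * exp (x i.succ - x i.castSucc)
        + g (Fin.last (m + 1)).castSucc * g (Fin.last (m + 2))
            * exp (-x (Fin.last (m + 1)) - x (Fin.last m).castSucc)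
      = headBond g z * diagBond x z 0 + ∑ k, crossBond g x z k * diagBond x z k.succ
        + crossBond g x z (Fin.last m) * tailBond g x z := by
  have hcross (k : Fin (m + 1)) :
      g k.succ.castSucc * exp (x k.succ - x k.castSucc)
        = crossBond g x z k * diagBond x z k.succ := by
    simp only [crossBond, diagBond, exp_sub]
    field_simp
  rw [Finset.sum_congr rfl fun k _ => hcross k]
  simp only [headBond, diagBond, crossBond, tailBond, Fin.succ_last, exp_sub, exp_neg]
  field_simp

theorem potential_BC_eq :
    (g 0 / 2) * (exp (z 0) + g 0 * exp (2 * z 0))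
        + ∑ i : Fin (m + 1), g i.succ.castSucc * exp (z i.succ - z i.castSucc)
        + 2 * g (Fin.last (m + 2)) * exp (-(2 * z (Fin.last (m + 1))))
      = headBond g z / 2 + headBond g z ^ 2 / 2 + ∑ k, diagBond x z k.castSucc * crossBond g x z k
        + 2 * (diagBond x z (Fin.last _) * tailBond g x z) := by
  have hcross (k : Fin (m + 1)) :
      g k.succ.castSucc * exp (z k.succ - z k.castSucc)
        = diagBond x z k.castSucc * crossBond g x z k := by
    simp only [crossBond, diagBond, exp_sub]
    field_simp
  rw [Finset.sum_congr rfl fun k _ => hcross k]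
  simp only [headBond, diagBond, tailBond, two_mul, neg_add, exp_add, exp_sub, exp_neg]
  field_simp

end Qker

/-- The kernel `Q` intertwines the quadratic Hamiltonians of the affine
`B^{(1)}_n` and `BC^{(1)}_n` closed Toda chains, `n = m + 2 ≥ 2`. -/
theorem B1_BC1_intertwining (m : ℕ) (g : Fin (m + 3) → ℝ)
    (x z : Fin (m + 2) → ℝ) :
    -(1/2) * (∑ i : Fin (m + 2), pd2 (fun u => Qker m g u z) i x)
      + (g 0 * Real.exp (x 0)
          + (∑ i : Fin (m + 1), g i.succ.castSucc * Real.exp (x i.succ - x i.castSucc))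
          + g (Fin.last (m + 1)).castSucc * g (Fin.last (m + 2))
              * Real.exp (-x (Fin.last (m + 1)) - x (Fin.last m).castSucc)) * Qker m g x z
    = -(1/2) * (∑ i : Fin (m + 2), pd2 (fun v => Qker m g x v) i z)
      + ((g 0 / 2) * (Real.exp (z 0) + g 0 * Real.exp (2 * z 0))
          + (∑ i : Fin (m + 1), g i.succ.castSucc * Real.exp (z i.succ - z i.castSucc))
          + 2 * g (Fin.last (m + 2))
              * Real.exp (-(2 * z (Fin.last (m + 1))))) * Qker m g x z := by
  rw [Qker.sum_pd2_left, Qker.sum_pd2_right, Qker.potential_B_eq g x z, Qker.potential_BC_eq g x z]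
  linear_combination Qker m g x z * Qker.bond_identity (Qker.diagBond x z) (Qker.crossBond g x z)
    (Qker.tailBond g x z) (Qker.headBond g z)
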